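/- Let A be an abelian semigroup and M an abelian group, and suppose that for each d ≥ 1 the map x ↦ d!·x on A is bijective. If f : A → M satisfies Δ_{u_1} ⋯ Δ_{u_{n+1}} f = 0 for all u_1, …, u_{n+1} ∈ A, then f admits a polynomial expansion f = Σ_{k=0}^n f_k* where each f_k : A^k → M is symmetric and an additive homomorphism in each of its variables. -/

import Mathlib

/-- The difference operator: `(deltaOp u f) a = f (a + u) - f a`. -/
def deltaOp {A M : Type*} [Add A] [Sub M] (u : A) (f : A → M) : A → M :=
  fun a => f (a + u) - f a

/-- `psmul n a` is `n • a` for `n ≥ 1`, in an additive semigroup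
(with the junk value `psmul 0 a = a`). -/
def psmul {A : Type*} [Add A] : ℕ → A → A
  | 0, a => a
  | 1, a => a
  | n + 2, a => psmul (n + 1) a + a

/-!
Induction on `n`. If all `(n + 1)`-fold differences of `f` vanish, then
`g (u₁, …, uₙ) = Δ_{u₁} ⋯ Δ_{uₙ} f` does not depend on the base point; it is symmetric because
difference operators commute, and additive in each slot because
`Δ_{a + b} = Δ_a + Δ_b + Δ_b Δ_a`. Since `M` may have torsion, `g` is divided by `n!` inside one
slot of `A`, which gives a symmetric multiadditive `T` with `n! • T = g`. The `n`-fold differences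
of the diagonal `a ↦ T (a, …, a)` are `n! • T = g`, so the induction hypothesis applies to
`f - T (·, …, ·)`.
-/

open Function Finset

section Forms

variable {A M : Type*} {m : ℕ}

def IsSymmetricForm (F : (Fin m → A) → M) : Prop :=
  ∀ (σ : Equiv.Perm (Fin m)) (x : Fin m → A), F (x ∘ σ) = F x

def IsMultiAdditive [Add A] [Add M] (F : (Fin m → A) → M) : Prop :=
  ∀ (j : Fin m) (x : Fin m → A) (a b : A),
    F (update x j (a + b)) = F (update x j a) + F (update x j b)

lemma IsSymmetricForm.cons {F : (Fin (m + 1) → A) → M} (hs : IsSymmetricForm F) (c : A) :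
    IsSymmetricForm fun y : Fin m → A => F (Fin.cons c y) := by
  intro σ y
  have : (Fin.cons c (y ∘ σ) : Fin (m + 1) → A)
      = Fin.cons c y ∘ Equiv.Perm.decomposeFin.symm (0, σ) := by
    funext i
    cases i using Fin.cases <;>
      simp [Equiv.Perm.decomposeFin_symm_apply_zero, Equiv.Perm.decomposeFin_symm_apply_succ]
  exact (congrArg F this).trans (hs _ _)

lemma IsSymmetricForm.map_update_const {F : (Fin (m + 1) → A) → M} (hs : IsSymmetricForm F)
    (j : Fin (m + 1)) (a c : A) :
    F (update (fun _ => a) j c) = F (Fin.cons c fun _ => a) := by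
  rw [← hs (Equiv.swap 0 j), update_comp_equiv, Equiv.symm_swap, Equiv.swap_apply_right]
  congr 1
  funext i
  cases i using Fin.cases <;> simp

end Forms

section DeltaOp

variable {A M : Type*} [AddCommSemigroup A] [AddCommGroup M]

lemma deltaOp_comm (u v : A) (f : A → M) :
    deltaOp u (deltaOp v f) = deltaOp v (deltaOp u f) := by
  funext a
  simp only [deltaOp, add_right_comm a u v]
  abel

lemma deltaOp_add_left (a b : A) (f : A → M) :
    deltaOp (a + b) f = deltaOp a f + deltaOp b f + deltaOp b (deltaOp a f) := by
  funext x
  simp only [deltaOp, Pi.add_apply, add_comm a b, ← add_assoc]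
  abel

lemma deltaOp_add_right (u : A) (f g : A → M) :
    deltaOp u (f + g) = deltaOp u f + deltaOp u g := by
  funext a
  simp only [deltaOp, Pi.add_apply]
  abel

lemma foldr_deltaOp_add (l : List A) (f g : A → M) :
    l.foldr deltaOp (f + g) = l.foldr deltaOp f + l.foldr deltaOp g := by
  induction l with
  | nil => rfl
  | cons c l ih => simp only [List.foldr_cons, ih, deltaOp_add_right]

def iteratedDeltaHom (l : List A) : (A → M) →+ (A → M) :=
  AddMonoidHom.mk' (fun f => l.foldr deltaOp f) (foldr_deltaOp_add l)

lemma foldr_deltaOp_sub (l : List A) (f g : A → M) :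
    l.foldr deltaOp (f - g) = l.foldr deltaOp f - l.foldr deltaOp g :=
  map_sub (iteratedDeltaHom l) f g

lemma foldr_deltaOp_sum {ι : Type*} (s : Finset ι) (l : List A) (f : ι → A → M) :
    l.foldr deltaOp (∑ i ∈ s, f i) = ∑ i ∈ s, l.foldr deltaOp (f i) :=
  map_sum (iteratedDeltaHom l) f s

lemma foldr_deltaOp_deltaOp (l : List A) (c : A) (f : A → M) :
    l.foldr deltaOp (deltaOp c f) = deltaOp c (l.foldr deltaOp f) := by
  induction l with
  | nil => rfl
  | cons d l ih => simp only [List.foldr_cons, ih, deltaOp_comm]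

lemma List.Perm.foldr_deltaOp_eq {l₁ l₂ : List A} (h : l₁.Perm l₂) (f : A → M) :
    l₁.foldr deltaOp f = l₂.foldr deltaOp f :=
  h.foldr_eq' (fun x _ y _ z => deltaOp_comm y x z) f

lemma apply_eq_of_forall_deltaOp_eq_zero {R : A → M} (h : ∀ v, deltaOp v R = 0) (a b : A) :
    R a = R b := by
  have shift : ∀ x v, R (x + v) = R x := fun x v => sub_eq_zero.mp (congrFun (h v) x)
  rw [← shift a b, add_comm, shift]

end DeltaOp

section MultiAdditive

variable {A M : Type*} [Add A] {m : ℕ}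

lemma IsSymmetricForm.isMultiAdditive [Add M] {G : (Fin (m + 1) → A) → M} (hs : IsSymmetricForm G)
    (h0 : ∀ x a b, G (update x 0 (a + b)) = G (update x 0 a) + G (update x 0 b)) :
    IsMultiAdditive G := by
  intro j x a b
  have swap_slot : ∀ c, G (update x j c) = G (update (x ∘ Equiv.swap 0 j) 0 c) := by
    intro c
    rw [← hs (Equiv.swap 0 j), update_comp_equiv, Equiv.symm_swap, Equiv.swap_apply_right]
  rw [swap_slot, swap_slot, swap_slot, h0]

lemma IsMultiAdditive.cons [Add M] {F : (Fin (m + 1) → A) → M} (ha : IsMultiAdditive F) (c : A) :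
    IsMultiAdditive fun y : Fin m → A => F (Fin.cons c y) := by
  intro j y a b
  simp only [Fin.cons_update]
  exact ha j.succ _ a b

lemma IsMultiAdditive.map_update_psmul [AddMonoid M] {F : (Fin m → A) → M} (ha : IsMultiAdditive F)
    {d : ℕ} (hd : 1 ≤ d) (j : Fin m) (x : Fin m → A) (y : A) :
    F (update x j (psmul d y)) = d • F (update x j y) := by
  induction d, hd using Nat.le_induction with
  | base => simp [psmul]
  | succ d hd ih =>
    obtain ⟨d, rfl⟩ := Nat.exists_eq_add_of_le' hd
    rw [show psmul (d + 1 + 1) y = psmul (d + 1) y + y from rfl, ha, ih, ← succ_nsmul]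

end MultiAdditive

section Division

variable {A M : Type*} [AddCommSemigroup A] [AddCommGroup M]

lemma psmul_add (a b : A) : ∀ d : ℕ, psmul d (a + b) = psmul d a + psmul d b
  | 0 => rfl
  | 1 => rfl
  | d + 2 => by
    rw [show psmul (d + 2) (a + b) = psmul (d + 1) (a + b) + (a + b) from rfl,
      psmul_add a b (d + 1), add_add_add_comm]
    rfl

variable {m d : ℕ}

lemma exists_add_rightInverse_psmul (hd : Bijective (psmul d : A → A)) :
    ∃ ψ : A → A, (∀ y, psmul d (ψ y) = y) ∧ ∀ a b, ψ (a + b) = ψ a + ψ b := by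
  refine ⟨surjInv hd.2, surjInv_eq hd.2, fun a b => hd.1 ?_⟩
  rw [psmul_add, surjInv_eq hd.2, surjInv_eq hd.2, surjInv_eq hd.2]

variable {F : (Fin m → A) → M} {ψ : A → A}

lemma IsMultiAdditive.nsmul_map_update_of_psmul (ha : IsMultiAdditive F) (hd : 1 ≤ d)
    (hψ : ∀ y, psmul d (ψ y) = y) (j : Fin m) (x : Fin m → A) :
    d • F (update x j (ψ (x j))) = F x := by
  rw [← ha.map_update_psmul hd, hψ, update_eq_self]

/-- Both sides are `d` times the value with slots `i` and `j` divided. -/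
lemma IsMultiAdditive.map_update_of_psmul_eq (ha : IsMultiAdditive F) (hd : 1 ≤ d)
    (hψ : ∀ y, psmul d (ψ y) = y) (i j : Fin m) (x : Fin m → A) :
    F (update x i (ψ (x i))) = F (update x j (ψ (x j))) := by
  rcases eq_or_ne i j with rfl | hij
  · rfl
  have h := ha.nsmul_map_update_of_psmul hd hψ
  have hi := h i (update x j (ψ (x j)))
  rw [update_of_ne hij] at hi
  rw [← h j (update x i _), update_of_ne hij.symm, update_comm hij, hi]

theorem exists_isSymmetricForm_nsmul_eq (hd : 1 ≤ d) (hbij : Bijective (psmul d : A → A))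
    {g : (Fin (m + 1) → A) → M} (hs : IsSymmetricForm g) (ha : IsMultiAdditive g) :
    ∃ T : (Fin (m + 1) → A) → M,
      IsSymmetricForm T ∧ IsMultiAdditive T ∧ ∀ x, d • T x = g x := by
  obtain ⟨ψ, hψ, hψ_add⟩ := exists_add_rightInverse_psmul hbij
  have hT_symm : IsSymmetricForm fun x => g (update x 0 (ψ (x 0))) := by
    intro σ x
    simp only [comp_apply]
    rw [← σ.symm_apply_apply 0, ← update_comp_equiv, hs, σ.symm_apply_apply,
      ha.map_update_of_psmul_eq hd hψ]
  refine ⟨_, hT_symm, hT_symm.isMultiAdditive fun x a b => ?_,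
    ha.nsmul_map_update_of_psmul hd hψ 0⟩
  simp only [update_self, update_idem, hψ_add, ha 0]

end Division

section Diagonal

variable {A M : Type*} [AddCommSemigroup A] [AddCommGroup M] {m : ℕ}

lemma IsMultiAdditive.map_piecewise_add {F : (Fin m → A) → M}
    (ha : IsMultiAdditive F) (T : Finset (Fin m)) (x y : Fin m → A) :
    F (T.piecewise (x + y) y) = ∑ S ∈ T.powerset, F (S.piecewise x y) := by
  induction T using Finset.induction_on generalizing y with
  | empty => simp
  | insert a T haT ih =>
    have hy : T.piecewise (x + update y a (x a)) (update y a (x a))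
        = update (T.piecewise (x + y) y) a (x a) := by
      rw [update_piecewise_of_notMem (hi := haT)]
      exact T.piecewise_congr (fun i hi => by simp [update_of_ne (ne_of_mem_of_not_mem hi haT)])
        fun _ _ => rfl
    have hw : update (T.piecewise (x + y) y) a (y a) = T.piecewise (x + y) y :=
      update_eq_self_iff.mpr (piecewise_eq_of_notMem _ _ _ haT).symm
    rw [piecewise_insert, Pi.add_apply, ha, ← hy, hw, ih, ih, sum_powerset_insert haT, add_comm]
    congr 1
    refine sum_congr rfl fun S hS => ?_
    rw [piecewise_insert, update_piecewise_of_notMem (hi := fun h => haT (mem_powerset.mp hS h))]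

lemma IsMultiAdditive.deltaOp_piecewise {F : (Fin m → A) → M}
    (ha : IsMultiAdditive F) (K : Finset (Fin m)) (v : Fin m → A) (c : A) :
    deltaOp c (fun a => F (K.piecewise (fun _ => a) v))
      = ∑ S ∈ K.powerset.erase ∅,
          fun a => F ((K \ S).piecewise (fun _ => a) (S.piecewise (fun _ => c) v)) := by
  funext a
  have hsplit : K.piecewise (fun _ => a + c) v
      = K.piecewise ((fun _ => c) + K.piecewise (fun _ => a) v) (K.piecewise (fun _ => a) v) :=
    K.piecewise_congr (fun i hi => by simp [hi, add_comm]) fun i hi => by simp [hi]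
  have hterm : ∀ S ⊆ K, S.piecewise (fun _ => c) (K.piecewise (fun _ => a) v)
      = (K \ S).piecewise (fun _ => a) (S.piecewise (fun _ => c) v) := by
    intro S hS
    funext i
    by_cases hiS : i ∈ S
    · simp [hiS]
    · by_cases hiK : i ∈ K <;> simp [hiS, hiK]
  rw [deltaOp, hsplit, ha.map_piecewise_add, ← add_sum_erase _ _ (empty_mem_powerset K),
    piecewise_empty, add_sub_cancel_left, Finset.sum_apply]
  exact sum_congr rfl fun S hS => by rw [hterm S (mem_powerset.mp (mem_of_mem_erase hS))]

theorem IsMultiAdditive.foldr_deltaOp_piecewise_eq_zero {F : (Fin m → A) → M}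
    (ha : IsMultiAdditive F) (l : List A) (K : Finset (Fin m)) (v : Fin m → A)
    (hK : #K < l.length) :
    l.foldr deltaOp (fun a => F (K.piecewise (fun _ => a) v)) = 0 := by
  induction l generalizing K v with
  | nil => simp at hK
  | cons c l ih =>
    rw [List.foldr_cons, ← foldr_deltaOp_deltaOp, ha.deltaOp_piecewise, foldr_deltaOp_sum]
    refine sum_eq_zero fun S hS => ih _ _ ?_
    obtain ⟨hS0, hSK⟩ := mem_erase.mp hS
    have hS_pos := card_pos.mpr (nonempty_iff_ne_empty.mpr hS0)
    have hSK_card := card_le_card (mem_powerset.mp hSK)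
    rw [card_sdiff_of_subset (mem_powerset.mp hSK)]
    simp only [List.length_cons] at hK
    omega

/-- After `Δ_c`, only the terms linear in `c` survive `m` further differences. -/
lemma IsMultiAdditive.foldr_deltaOp_deltaOp_diag {F : (Fin (m + 1) → A) → M}
    (ha : IsMultiAdditive F) (c : A) (l : List A) (hl : l.length = m) :
    l.foldr deltaOp (deltaOp c fun a => F fun _ => a)
      = ∑ j, l.foldr deltaOp (fun a => F (update (fun _ => a) j c)) := by
  have hdiag : (fun a => F fun _ => a) = fun a => F (univ.piecewise (fun _ => a) fun _ => c) := by
    simp only [piecewise_univ]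
  have hsingle : ∀ (j : Fin (m + 1)) (a : A),
      (univ \ {j}).piecewise (fun _ => a) (fun _ => c) = update (fun _ => a) j c := by
    intro j a
    funext i
    rcases eq_or_ne i j with rfl | hij <;> simp [*]
  rw [hdiag, ha.deltaOp_piecewise, foldr_deltaOp_sum]
  simp only [piecewise_same]
  rw [← sum_subset (s₁ := powersetCard 1 univ), powersetCard_one, sum_map]
  · simp_rw [Embedding.coeFn_mk, hsingle]
  · intro S hS
    obtain ⟨j, rfl⟩ := card_eq_one.mp (mem_powersetCard.mp hS).2
    simp
  · intro S hS hS1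
    refine ha.foldr_deltaOp_piecewise_eq_zero _ _ _ ?_
    obtain ⟨hS0, -⟩ := mem_erase.mp hS
    have hS_pos := card_pos.mpr (nonempty_iff_ne_empty.mpr hS0)
    have hS_ne : #S ≠ 1 := fun h => hS1 (mem_powersetCard.mpr ⟨subset_univ S, h⟩)
    have hS_le : #S ≤ m + 1 := by simpa using card_le_univ S
    rw [card_sdiff_of_subset (subset_univ S), card_univ, Fintype.card_fin]
    omega

theorem foldr_deltaOp_diag {F : (Fin m → A) → M} (hs : IsSymmetricForm F)
    (ha : IsMultiAdditive F) (u : Fin m → A) :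
    (List.ofFn u).foldr deltaOp (fun a => F fun _ => a) = fun _ => m.factorial • F u := by
  induction m with
  | zero =>
    funext a
    simp [Subsingleton.elim (fun _ => a) u]
  | succ m ih =>
    have hterm : ∀ j, (List.ofFn fun i => u i.succ).foldr deltaOp
        (fun a => F (update (fun _ => a) j (u 0))) = fun _ => m.factorial • F u := by
      intro j
      simp_rw [hs.map_update_const]
      rw [ih (hs.cons (u 0)) (ha.cons (u 0))]
      exact congrArg (fun x _ => m.factorial • F x) (Fin.cons_self_tail u)
    rw [List.ofFn_succ, List.foldr_cons, ← foldr_deltaOp_deltaOp,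
      ha.foldr_deltaOp_deltaOp_diag _ _ List.length_ofFn, sum_congr rfl fun j _ => hterm j]
    funext
    simp [Nat.factorial_succ, mul_nsmul']

end Diagonal

section Expansion

variable {A M : Type*} [AddCommSemigroup A] [AddCommGroup M]

theorem exists_foldr_deltaOp_eq_form [Nonempty A] {m : ℕ} {f : A → M}
    (hf : ∀ u : Fin (m + 2) → A, (List.ofFn u).foldr deltaOp f = 0) :
    ∃ g : (Fin (m + 1) → A) → M, IsSymmetricForm g ∧ IsMultiAdditive g ∧
      ∀ u, (List.ofFn u).foldr deltaOp f = fun _ => g u := by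
  let a₀ : A := Classical.arbitrary A
  have hfc : ∀ (u : Fin (m + 1) → A) (v : A), deltaOp v ((List.ofFn u).foldr deltaOp f) = 0 :=
    fun u v => by simpa only [List.ofFn_cons, List.foldr_cons] using hf (Fin.cons v u)
  have hs : IsSymmetricForm fun u : Fin (m + 1) → A => (List.ofFn u).foldr deltaOp f a₀ :=
    fun σ x => congrFun ((σ.ofFn_comp_perm x).foldr_deltaOp_eq f) a₀
  refine ⟨_, hs, hs.isMultiAdditive fun x a b => ?_,
    fun u => funext fun a => apply_eq_of_forall_deltaOp_eq_zero (hfc u) a a₀⟩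
  have hofFn : ∀ c, List.ofFn (update x 0 c) = c :: List.ofFn (Fin.tail x) := fun c => by
    rw [← Fin.cons_self_tail x, Fin.update_cons_zero, List.ofFn_cons, Fin.tail_cons]
  have hsecond : deltaOp b (deltaOp a ((List.ofFn (Fin.tail x)).foldr deltaOp f)) = 0 := by
    simpa only [List.ofFn_cons, List.foldr_cons] using hf (Fin.cons b (Fin.cons a (Fin.tail x)))
  simp only [hofFn, List.foldr_cons, deltaOp_add_left, hsecond, Pi.add_apply, Pi.zero_apply,
    add_zero]

theorem exists_polynomial_expansion [Nonempty A]
    (hA : ∀ d : ℕ, 1 ≤ d → Bijective (psmul d.factorial : A → A)) :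
    ∀ (n : ℕ) (f : A → M), (∀ u : Fin (n + 1) → A, (List.ofFn u).foldr deltaOp f = 0) →
    ∃ F : (k : ℕ) → (Fin k → A) → M, (∀ k, IsSymmetricForm (F k)) ∧
      (∀ k, IsMultiAdditive (F k)) ∧ ∀ a, f a = ∑ k ∈ range (n + 1), F k fun _ => a := by
  intro n
  induction n with
  | zero =>
    intro f hf
    let a₀ : A := Classical.arbitrary A
    have hconst : ∀ a, f a = f a₀ := fun a => apply_eq_of_forall_deltaOp_eq_zero
      (fun v => by simpa using hf fun _ => v) a a₀
    refine ⟨update 0 0 fun _ => f a₀,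
      (forall_update_iff _ fun _ G => IsSymmetricForm G).mpr ⟨fun _ _ => rfl, fun _ _ _ _ => rfl⟩,
      (forall_update_iff _ fun _ G => IsMultiAdditive G).mpr
        ⟨fun j => j.elim0, fun _ _ _ _ _ _ => (add_zero 0).symm⟩,
      fun a => by simp [hconst a]⟩
  | succ n ih =>
    intro f hf
    obtain ⟨g, hgs, hga, hfg⟩ := exists_foldr_deltaOp_eq_form hf
    obtain ⟨T, hTs, hTa, hTg⟩ :=
      exists_isSymmetricForm_nsmul_eq (n + 1).factorial_pos (hA (n + 1) n.succ_pos) hgs hga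
    obtain ⟨F, hFs, hFa, hfF⟩ := ih (f - fun a => T fun _ => a) fun u => by
      rw [foldr_deltaOp_sub, hfg, foldr_deltaOp_diag hTs hTa, hTg, sub_self]
    refine ⟨update F (n + 1) T, (forall_update_iff _ fun _ G => IsSymmetricForm G).mpr
      ⟨hTs, fun k _ => hFs k⟩, (forall_update_iff _ fun _ G => IsMultiAdditive G).mpr
      ⟨hTa, fun k _ => hFa k⟩, fun a => ?_⟩
    rw [sum_range_succ, update_self, sum_congr rfl fun k hk => by
      rw [update_of_ne (mem_range.mp hk).ne], ← hfF a, Pi.sub_apply, sub_add_cancel]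

end Expansion

theorem stmt5 {A M : Type*} [AddCommSemigroup A] [AddCommGroup M]
    (hA : ∀ d : ℕ, 1 ≤ d → Function.Bijective (fun x : A => psmul (Nat.factorial d) x))
    (f : A → M) {n : ℕ}
    (hf : ∀ u : Fin (n + 1) → A, List.foldr deltaOp f (List.ofFn u) = 0) :
    ∃ F : (k : ℕ) → (Fin k → A) → M,
      (∀ k ≤ n, ∀ (σ : Equiv.Perm (Fin k)) (x : Fin k → A), F k (x ∘ σ) = F k x) ∧
      (∀ k ≤ n, ∀ (j : Fin k) (x : Fin k → A) (a b : A),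
        F k (Function.update x j (a + b))
          = F k (Function.update x j a) + F k (Function.update x j b)) ∧
      (∀ a : A, f a = ∑ k ∈ Finset.range (n + 1), F k (fun _ => a)) := by
  rcases isEmpty_or_nonempty A with _ | _
  · exact ⟨0, fun _ _ _ _ => rfl, fun _ _ _ _ a => isEmptyElim a, isEmptyElim⟩
  · obtain ⟨F, hFs, hFa, hfF⟩ := exists_polynomial_expansion hA n f hf
    exact ⟨F, fun k _ => hFs k, fun k _ => hFa k, hfF⟩
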